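/- arXiv:0908.2256 — 2 statements merged into one kernel-verified Lean document; each statement's English description precedes it below -/
import Mathlib

section
/- Let x ∈ [0,1]^n be feasible for the strengthened LP of a k-column-sparse packing instance, let α > 0 with αk ≥ 1, and let S include each item i independently with probability x_i/(αk). For i ∈ [n] and j ∈ N(i), let E_{ij} be the event that Σ_{i' ∈ S : s_{i'j} ≥ s_{ij}} s_{i'j} > 1. If item i is big for constraint j (i.e. s_{ij} > 1/2), then Pr[E_{ij} | i ∈ S] ≤ 1/(αk). -/
open Finset
open scoped Classical BigOperators

/-- Probability of the subset `T` under the product distribution on subsets of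
`Fin n` with marginal probabilities `q`. -/
noncomputable def prodP {n : ℕ} (q : Fin n → ℝ) (T : Finset (Fin n)) : ℝ :=
  (∏ i ∈ T, q i) * ∏ i ∈ Tᶜ, (1 - q i)

/-- Probability of an event under the product distribution with marginals `q`. -/
noncomputable def prE {n : ℕ} (q : Fin n → ℝ) (E : Finset (Fin n) → Prop) : ℝ :=
  ∑ T : Finset (Fin n), if E T then prodP q T else 0


lemma prodP_nonneg {n : ℕ} {q : Fin n → ℝ} (h0 : ∀ i, 0 ≤ q i) (h1 : ∀ i, q i ≤ 1)
    (T : Finset (Fin n)) : 0 ≤ prodP q T := by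
  unfold prodP
  apply mul_nonneg
  · exact Finset.prod_nonneg fun i _ => h0 i
  · exact Finset.prod_nonneg fun i _ => by linarith [h1 i]

lemma prE_mono {n : ℕ} {q : Fin n → ℝ} (h0 : ∀ i, 0 ≤ q i) (h1 : ∀ i, q i ≤ 1)
    {E F : Finset (Fin n) → Prop} (h : ∀ T, E T → F T) : prE q E ≤ prE q F := by
  unfold prE
  apply Finset.sum_le_sum
  intro T _
  by_cases hE : E T
  · simp [hE, h T hE]
  · simp only [hE, if_false]
    split
    · exact prodP_nonneg h0 h1 T
    · exact le_refl 0

lemma prE_congr {n : ℕ} (q : Fin n → ℝ) {E F : Finset (Fin n) → Prop}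
    (h : ∀ T, E T ↔ F T) : prE q E = prE q F := by
  unfold prE
  exact Finset.sum_congr rfl fun T _ => by rw [h T]

lemma prE_subset {n : ℕ} (q : Fin n → ℝ) (A : Finset (Fin n)) :
    prE q (fun T => A ⊆ T) = ∏ i ∈ A, q i := by
  unfold prE prodP
  have key : ∀ T : Finset (Fin n),
      (@ite ℝ (A ⊆ T) (Classical.propDecidable _) ((∏ i ∈ T, q i) * ∏ i ∈ Tᶜ, (1 - q i)) 0)
      = (∏ i ∈ T, q i) * ∏ a ∈ (univ : Finset (Fin n)) \ T,
          (if a ∈ A then (0:ℝ) else 1 - q a) := by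
    intro T
    rw [← Finset.compl_eq_univ_sdiff]
    by_cases h : A ⊆ T
    · rw [if_pos h]
      congr 1
      apply Finset.prod_congr rfl
      intro a ha
      have : a ∉ A := fun hiA => (Finset.mem_compl.mp ha) (h hiA)
      simp [this]
    · rw [if_neg h]
      obtain ⟨a, haA, haT⟩ := Finset.not_subset.mp h
      symm
      apply mul_eq_zero_of_right
      apply Finset.prod_eq_zero (Finset.mem_compl.mpr haT)
      simp [haA]
  beta_reduce
  simp only [key]
  rw [show (univ : Finset (Finset (Fin n))) = (univ : Finset (Fin n)).powerset from
    Finset.powerset_univ.symm, ← Finset.prod_add]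
  rw [← Finset.prod_mul_prod_compl A]
  have h1 : ∏ a ∈ A, (q a + (if a ∈ A then (0:ℝ) else 1 - q a)) = ∏ a ∈ A, q a := by
    apply Finset.prod_congr rfl; intro a ha; simp [ha]
  have h2 : ∏ a ∈ Aᶜ, (q a + (if a ∈ A then (0:ℝ) else 1 - q a)) = 1 := by
    apply Finset.prod_eq_one; intro a ha
    have : a ∉ A := Finset.mem_compl.mp ha
    simp [this]
  rw [h1, h2, mul_one]

lemma prE_union {n : ℕ} {q : Fin n → ℝ} (h0 : ∀ i, 0 ≤ q i) (h1 : ∀ i, q i ≤ 1)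
    (A : Finset (Fin n)) (P : Fin n → Finset (Fin n) → Prop) :
    prE q (fun T => ∃ i' ∈ A, P i' T) ≤ ∑ i' ∈ A, prE q (P i') := by
  unfold prE
  rw [Finset.sum_comm]
  apply Finset.sum_le_sum
  intro T _
  by_cases h : ∃ i' ∈ A, P i' T
  · simp only [h, if_true]
    obtain ⟨a, haA, haP⟩ := h
    calc prodP q T = (if P a T then prodP q T else 0) := by simp [haP]
      _ ≤ ∑ i' ∈ A, if P i' T then prodP q T else 0 := by
          apply Finset.single_le_sum (fun b _ => ?_) haA
          split
          · exact prodP_nonneg h0 h1 T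
          · exact le_refl 0
  · simp only [h, if_false]
    apply Finset.sum_nonneg
    intro b _
    split
    · exact prodP_nonneg h0 h1 T
    · exact le_refl 0

/-- if item `i` is big for constraint `j`, then
`Pr[E_ij | i ∈ S] ≤ 1/(αk)` (stated in multiplied-out form, i.e. multiplied
through by `Pr[i ∈ S]`), where `x` is feasible for the strengthened LP. -/
theorem big_item_bound (n m k : ℕ) (s : Fin n → Fin m → ℝ)
    (hs : ∀ i j, s i j ∈ Set.Icc (0:ℝ) 1)
    (hsparse : ∀ i, ((univ : Finset (Fin m)).filter (fun j => 0 < s i j)).card ≤ k)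
    (x : Fin n → ℝ) (hx : ∀ i, x i ∈ Set.Icc (0:ℝ) 1)
    (hLP : ∀ j, ∑ i, s i j * x i ≤ 1)
    (hLPbig : ∀ j, ∑ i ∈ univ.filter (fun i => 1/2 < s i j), x i ≤ 1)
    (α : ℝ) (hα : 0 < α) (hαk : 1 ≤ α * k)
    (q : Fin n → ℝ) (hq : ∀ i, q i = x i / (α * k))
    (i : Fin n) (j : Fin m) (hbig : 1/2 < s i j) :
    prE q (fun T =>
        (1 < ∑ i' ∈ T.filter (fun i'' => s i j ≤ s i'' j), s i' j) ∧ i ∈ T)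
      ≤ (1 / (α * k)) * prE q (fun T => i ∈ T) := by
  have hαk0 : (0:ℝ) < α * k := lt_of_lt_of_le one_pos hαk
  have hq0 : ∀ i', 0 ≤ q i' := fun i' => by
    rw [hq]; exact div_nonneg (hx i').1 hαk0.le
  have hq1 : ∀ i', q i' ≤ 1 := fun i' => by
    rw [hq]
    rw [div_le_one hαk0]
    exact le_trans (hx i').2 hαk
  set B' : Finset (Fin n) := (univ.filter (fun i' => 1/2 < s i' j)).erase i with hB'
  -- pointwise implication
  have himp : ∀ T : Finset (Fin n),
      ((1 < ∑ i' ∈ T.filter (fun i'' => s i j ≤ s i'' j), s i' j) ∧ i ∈ T) →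
      ∃ i' ∈ B', i' ∈ T ∧ i ∈ T := by
    intro T ⟨hsum, hiT⟩
    by_contra hcon
    push_neg at hcon
    -- then the filter set is ⊆ {i}
    have hsub : T.filter (fun i'' => s i j ≤ s i'' j) ⊆ {i} := by
      intro a ha
      rw [Finset.mem_filter] at ha
      rw [Finset.mem_singleton]
      by_contra hai
      have haB' : a ∈ B' := by
        rw [hB', Finset.mem_erase, Finset.mem_filter]
        exact ⟨hai, Finset.mem_univ a, lt_of_lt_of_le hbig ha.2⟩
      exact (hcon a haB' ha.1) hiT
    have : ∑ i' ∈ T.filter (fun i'' => s i j ≤ s i'' j), s i' j ≤ ∑ i' ∈ {i}, s i' j := by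
      apply Finset.sum_le_sum_of_subset_of_nonneg hsub
      intro a _ _; exact (hs a j).1
    rw [Finset.sum_singleton] at this
    linarith [(hs i j).2]
  calc prE q (fun T =>
        (1 < ∑ i' ∈ T.filter (fun i'' => s i j ≤ s i'' j), s i' j) ∧ i ∈ T)
      ≤ prE q (fun T => ∃ i' ∈ B', i' ∈ T ∧ i ∈ T) := prE_mono hq0 hq1 himp
    _ ≤ ∑ i' ∈ B', prE q (fun T => i' ∈ T ∧ i ∈ T) :=
        prE_union hq0 hq1 B' (fun i' T => i' ∈ T ∧ i ∈ T)
    _ = ∑ i' ∈ B', q i' * q i := by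
        apply Finset.sum_congr rfl
        intro i' hi'
        have hne : i' ≠ i := Finset.ne_of_mem_erase hi'
        have : prE q (fun T => i' ∈ T ∧ i ∈ T) = prE q (fun T => ({i', i} : Finset (Fin n)) ⊆ T) := by
          apply prE_congr
          intro T
          rw [Finset.insert_subset_iff, Finset.singleton_subset_iff]
        rw [this, prE_subset, Finset.prod_insert (by simp [hne]), Finset.prod_singleton]
    _ ≤ (1 / (α * k)) * q i := by
        rw [← Finset.sum_mul]
        apply mul_le_mul_of_nonneg_right _ (hq0 i)
        have : ∑ i' ∈ B', q i' = (∑ i' ∈ B', x i') / (α * k) := by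
          rw [Finset.sum_div]; exact Finset.sum_congr rfl fun i' _ => hq i'
        rw [this, div_le_div_iff₀ hαk0 hαk0, one_mul]
        have h1 : ∑ i' ∈ B', x i' ≤ ∑ i' ∈ univ.filter (fun i'' => 1/2 < s i'' j), x i' := by
          apply Finset.sum_le_sum_of_subset_of_nonneg (Finset.erase_subset _ _)
          intro a _ _; exact (hx a).1
        calc (∑ i' ∈ B', x i') * (α * k) ≤ 1 * (α * k) := by
              apply mul_le_mul_of_nonneg_right _ hαk0.le
              exact le_trans h1 (hLPbig j)
          _ = α * k := one_mul _
    _ = (1 / (α * k)) * prE q (fun T => i ∈ T) := by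
        congr 1
        have : prE q (fun T => i ∈ T) = prE q (fun T => ({i} : Finset (Fin n)) ⊆ T) :=
          prE_congr q fun T => (Finset.singleton_subset_iff).symm
        rw [this, prE_subset, Finset.prod_singleton]
end

section
/- Let x ∈ [0,1]^n be LP-feasible for a k-column-sparse packing instance, let α > 0 and ℓ ≥ 2 with αk ≥ 1, and let S include each item i independently with probability x_i/(αk). For i ∈ [n] and j ∈ N(i), let E_{ij} be the event that Σ_{i' ∈ S : s_{i'j} ≥ s_{ij}} s_{i'j} > 1. If item i is tiny for constraint j (i.e. 0 < s_{ij} < 1/ℓ), then Pr[E_{ij} | i ∈ S] ≤ (1/(αk)) · (1 + 2/ℓ). -/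
open Finset
open scoped Classical BigOperators

lemma marg {n : ℕ} (q : Fin n → ℝ) (A : Finset (Fin n)) :
    ∑ T : Finset (Fin n), (if A ⊆ T then prodP q T else 0) = ∏ a ∈ A, q a := by
  classical
  rw [← Finset.sum_filter]
  rw [Finset.sum_nbij' (i := fun T => T \ A) (j := fun U => A ∪ U)
    (t := (Finset.univ \ A).powerset)
    (g := fun U => (∏ a ∈ A, q a) * ((∏ a ∈ U, q a) * ∏ a ∈ (Finset.univ \ A) \ U, (1 - q a)))
    (by intro T hT; simp only [Finset.mem_powerset]; intro a ha
        simp only [Finset.mem_sdiff] at ha ⊢; exact ⟨Finset.mem_univ a, ha.2⟩)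
    (by intro U hU; simp only [Finset.mem_filter]; exact ⟨Finset.mem_univ _, Finset.subset_union_left⟩)
    (by intro T hT; simp only [Finset.mem_filter] at hT
        exact Finset.union_sdiff_of_subset hT.2)
    (by intro U hU; simp only [Finset.mem_powerset] at hU
        show (A ∪ U) \ A = U
        rw [Finset.union_sdiff_cancel_left]
        rw [Finset.disjoint_left]; intro a haA haU
        exact ((Finset.mem_sdiff.mp (hU haU)).2) haA)
    (by intro T hT; simp only [Finset.mem_filter] at hT
        show prodP q T = _
        have h1 : (∏ a ∈ A, q a) * ∏ a ∈ T \ A, q a = ∏ a ∈ T, q a := by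
          rw [mul_comm]; exact Finset.prod_sdiff hT.2
        have h2 : (Finset.univ \ A) \ (T \ A) = Tᶜ := by
          ext a
          simp only [Finset.mem_sdiff, Finset.mem_univ, true_and, Finset.mem_compl, not_and,
            not_not]
          constructor
          · rintro ⟨ha, hb⟩ hc; exact ha (hb hc)
          · intro h; exact ⟨fun hA => h (hT.2 hA), fun hTa => absurd hTa h⟩
        rw [prodP, ← h1, h2]; ring)]
  rw [← Finset.mul_sum, ← Finset.prod_add]
  simp

/-- for a parameter `ℓ ≥ 2`, if item `i` is tiny for constraint
`j` (i.e. `0 < s i j < 1/ℓ`), then `Pr[E_ij | i ∈ S] ≤ (1/(αk))(1 + 2/ℓ)`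
(stated in multiplied-out form, i.e. multiplied through by `Pr[i ∈ S]`),
where `x` is LP-feasible. -/
theorem tiny_item_bound (n m k : ℕ) (s : Fin n → Fin m → ℝ)
    (hs : ∀ i j, s i j ∈ Set.Icc (0:ℝ) 1)
    (hsparse : ∀ i, ((univ : Finset (Fin m)).filter (fun j => 0 < s i j)).card ≤ k)
    (x : Fin n → ℝ) (hx : ∀ i, x i ∈ Set.Icc (0:ℝ) 1)
    (hLP : ∀ j, ∑ i, s i j * x i ≤ 1)
    (α : ℝ) (hα : 0 < α) (hαk : 1 ≤ α * k)
    (ℓ : ℝ) (hℓ : 2 ≤ ℓ)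
    (q : Fin n → ℝ) (hq : ∀ i, q i = x i / (α * k))
    (i : Fin n) (j : Fin m) (htiny : 0 < s i j ∧ s i j < 1/ℓ) :
    prE q (fun T =>
        (1 < ∑ i' ∈ T.filter (fun i'' => s i j ≤ s i'' j), s i' j) ∧ i ∈ T)
      ≤ (1 / (α * k)) * (1 + 2/ℓ) * prE q (fun T => i ∈ T) := by
  classical
  obtain ⟨hpos, hsmall⟩ := htiny
  have hℓ0 : (0:ℝ) < ℓ := by linarith
  have hαk0 : (0:ℝ) < α * k := by linarith
  have hq0 : ∀ i', 0 ≤ q i' := fun i' => by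
    rw [hq]; exact div_nonneg (hx i').1 hαk0.le
  have hq1 : ∀ i', q i' ≤ 1 := fun i' => by
    rw [hq, div_le_one hαk0]; linarith [(hx i').2]
  have hP0 : ∀ T : Finset (Fin n), 0 ≤ prodP q T := fun T =>
    mul_nonneg (Finset.prod_nonneg fun a _ => hq0 a)
      (Finset.prod_nonneg fun a _ => by linarith [hq1 a])
  obtain ⟨c, hc⟩ : ∃ c : ℝ, c = 1 - 1/ℓ := ⟨_, rfl⟩
  have hc0 : 0 < c := by
    have h1 : 1/ℓ < 1 := by rw [div_lt_one hℓ0]; linarith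
    rw [hc]; linarith
  set f : Finset (Fin n) → ℝ :=
    fun T => ∑ i' ∈ (T.erase i).filter (fun i'' => s i j ≤ s i'' j), s i' j with hf
  have hf0 : ∀ T, 0 ≤ f T := fun T => Finset.sum_nonneg fun i' _ => (hs i' j).1
  set D : Finset (Fin n) := univ.filter (fun i' => i' ≠ i ∧ s i j ≤ s i' j) with hD
  -- step 1
  have step1 : prE q (fun T =>
        (1 < ∑ i' ∈ T.filter (fun i'' => s i j ≤ s i'' j), s i' j) ∧ i ∈ T)
      ≤ ∑ T : Finset (Fin n), (if c < f T ∧ i ∈ T then prodP q T else 0) := by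
    unfold prE
    apply Finset.sum_le_sum
    intro T _
    by_cases hE : (1 < ∑ i' ∈ T.filter (fun i'' => s i j ≤ s i'' j), s i' j) ∧ i ∈ T
    · rw [if_pos hE, if_pos]
      refine ⟨?_, hE.2⟩
      have hiT : i ∈ T.filter (fun i'' => s i j ≤ s i'' j) :=
        Finset.mem_filter.mpr ⟨hE.2, le_refl _⟩
      have hadd := Finset.add_sum_erase _ (fun i' => s i' j) hiT
      have heq : (T.filter (fun i'' => s i j ≤ s i'' j)).erase i
          = (T.erase i).filter (fun i'' => s i j ≤ s i'' j) := by
        ext a; simp only [Finset.mem_erase, Finset.mem_filter]; tauto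
      have hft : f T = (∑ i' ∈ T.filter (fun i'' => s i j ≤ s i'' j), s i' j) - s i j := by
        rw [hf]; simp only []; rw [← heq]; linarith [hadd]
      rw [hft]; linarith [hE.1]
    · rw [if_neg hE]
      by_cases h2 : c < f T ∧ i ∈ T
      · rw [if_pos h2]; exact hP0 T
      · rw [if_neg h2]
  -- step 2 (Markov)
  have step2 : ∑ T : Finset (Fin n), (if c < f T ∧ i ∈ T then prodP q T else 0)
      ≤ (1/c) * ∑ T : Finset (Fin n), (if i ∈ T then f T * prodP q T else 0) := by
    rw [Finset.mul_sum]
    apply Finset.sum_le_sum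
    intro T _
    by_cases hE : c < f T ∧ i ∈ T
    · rw [if_pos hE, if_pos hE.2]
      calc prodP q T = (1/c) * (c * prodP q T) := by field_simp
        _ ≤ (1/c) * (f T * prodP q T) := by
            apply mul_le_mul_of_nonneg_left
              (mul_le_mul_of_nonneg_right hE.1.le (hP0 T)) (by positivity)
    · rw [if_neg hE]
      by_cases hiT : i ∈ T
      · rw [if_pos hiT]
        exact mul_nonneg (by positivity) (mul_nonneg (hf0 T) (hP0 T))
      · rw [if_neg hiT, mul_zero]
  -- pairwise marginal
  have hmargpair : ∀ i' : Fin n, i' ≠ i →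
      ∑ T : Finset (Fin n), (if i ∈ T ∧ i' ∈ T then prodP q T else 0) = q i * q i' := by
    intro i' hne
    have hm := marg q ({i, i'} : Finset (Fin n))
    rw [Finset.prod_pair hne.symm] at hm
    rw [← hm]
    refine Finset.sum_congr rfl fun T _ => ?_
    exact if_congr (by simp [Finset.insert_subset_iff]) rfl rfl
  -- step 3
  have step3 : ∑ T : Finset (Fin n), (if i ∈ T then f T * prodP q T else 0)
      = ∑ i' ∈ D, s i' j * (q i * q i') := by
    have hswap : ∀ T : Finset (Fin n), (if i ∈ T then f T * prodP q T else 0)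
        = ∑ i' ∈ D, (if i ∈ T ∧ i' ∈ T then s i' j * prodP q T else 0) := by
      intro T
      by_cases hiT : i ∈ T
      · rw [if_pos hiT]
        have hset : (T.erase i).filter (fun i'' => s i j ≤ s i'' j)
            = D.filter (fun i' => i' ∈ T) := by
          ext a
          simp only [hD, Finset.mem_erase, Finset.mem_filter, Finset.mem_univ, true_and]
          tauto
        have : f T * prodP q T = ∑ i' ∈ D.filter (fun i' => i' ∈ T), s i' j * prodP q T := by
          rw [hf]; simp only []; rw [hset, Finset.sum_mul]
        rw [this, Finset.sum_filter]
        refine Finset.sum_congr rfl fun i' _ => ?_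
        by_cases h : i' ∈ T
        · rw [if_pos h, if_pos ⟨hiT, h⟩]
        · rw [if_neg h, if_neg (by tauto)]
      · rw [if_neg hiT]
        symm; apply Finset.sum_eq_zero; intro i' _; rw [if_neg (by tauto)]
    rw [Finset.sum_congr rfl (fun T _ => hswap T), Finset.sum_comm]
    refine Finset.sum_congr rfl fun i' hi' => ?_
    have hne : i' ≠ i := by
      have := Finset.mem_filter.mp hi'; exact this.2.1
    calc ∑ T : Finset (Fin n), (if i ∈ T ∧ i' ∈ T then s i' j * prodP q T else 0)
        = s i' j * ∑ T : Finset (Fin n), (if i ∈ T ∧ i' ∈ T then prodP q T else 0) := by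
          rw [Finset.mul_sum]
          exact Finset.sum_congr rfl fun T _ => by rw [mul_ite, mul_zero]
      _ = s i' j * (q i * q i') := by rw [hmargpair i' hne]
  -- step 4
  have hb : ∑ i' ∈ D, s i' j * (q i * q i') ≤ q i * (1 / (α * k)) := by
    have h1 : ∑ i' ∈ D, s i' j * (q i * q i') = q i * ∑ i' ∈ D, s i' j * q i' := by
      rw [Finset.mul_sum]; exact Finset.sum_congr rfl fun i' _ => by ring
    have h2 : ∑ i' ∈ D, s i' j * q i' ≤ ∑ i' : Fin n, s i' j * q i' := by
      apply Finset.sum_le_sum_of_subset_of_nonneg (Finset.filter_subset _ _)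
      intro i' _ _; exact mul_nonneg (hs i' j).1 (hq0 i')
    have h3 : ∑ i' : Fin n, s i' j * q i' = (∑ i' : Fin n, s i' j * x i') / (α * k) := by
      rw [Finset.sum_div]
      exact Finset.sum_congr rfl fun i' _ => by rw [hq]; ring
    have h4 : (∑ i' : Fin n, s i' j * x i') / (α * k) ≤ 1 / (α * k) := by
      gcongr
      exact hLP j
    rw [h1]
    exact mul_le_mul_of_nonneg_left (by linarith) (hq0 i)
  -- RHS
  have hRHS : prE q (fun T => i ∈ T) = q i := by
    unfold prE
    have hm := marg q ({i} : Finset (Fin n))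
    rw [Finset.prod_singleton] at hm
    rw [← hm]
    refine Finset.sum_congr rfl fun T _ => ?_
    by_cases h : i ∈ T <;> simp [h]
  -- numeric
  have h1c : 1/c ≤ 1 + 2/ℓ := by
    have hℓne : ℓ ≠ 0 := ne_of_gt hℓ0
    rw [div_le_iff₀ hc0, hc]
    have hexp : (1 + 2/ℓ) * (1 - 1/ℓ) = 1 + 1/ℓ - 2/(ℓ*ℓ) := by
      field_simp; ring
    rw [hexp]
    have h2 : 2/(ℓ*ℓ) ≤ 1/ℓ := by
      rw [div_le_div_iff₀ (by positivity) hℓ0]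
      nlinarith
    linarith
  calc prE q (fun T =>
        (1 < ∑ i' ∈ T.filter (fun i'' => s i j ≤ s i'' j), s i' j) ∧ i ∈ T)
      ≤ (1/c) * (q i * (1 / (α * k))) := by
        refine le_trans step1 (le_trans step2 ?_)
        rw [step3]
        exact mul_le_mul_of_nonneg_left hb (by positivity)
    _ ≤ (1 / (α * k)) * (1 + 2/ℓ) * q i := by
        have : (1/c) * (q i * (1 / (α * k))) = ((1/c) * (1 / (α * k))) * q i := by ring
        rw [this]
        apply mul_le_mul_of_nonneg_right _ (hq0 i)
        have h2 : (0:ℝ) ≤ 1 / (α * k) := by positivity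
        calc (1/c) * (1 / (α * k)) ≤ (1 + 2/ℓ) * (1 / (α * k)) :=
            mul_le_mul_of_nonneg_right h1c h2
          _ = (1 / (α * k)) * (1 + 2/ℓ) := by ring
    _ = (1 / (α * k)) * (1 + 2/ℓ) * prE q (fun T => i ∈ T) := by rw [hRHS]
end
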